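/- Let Ω ⊆ ℝ² be an open subset of the Grushin plane and let 1 < p < ∞. Let v ∈ C^1(Ω) with v(x) > 0 for all x ∈ Ω be a weak sub-solution of −∇_G·(|∇_G v|^{p−2}∇_G v) = 0 in Ω. Then for every nonnegative φ ∈ C_c^∞(Ω): ∫_Ω φ^p |∇_G v|^p dx ≤ p^p ∫_Ω v^p |∇_G φ|^p dx. -/

import Mathlib

open MeasureTheory
open scoped RealInnerProductSpace

/-- The Grushin gradient on the Grushin plane `ℝ²`, associated with the vector fields
`X₁ = ∂/∂x₁` and `X₂ = x₁ ∂/∂x₂`:  `∇_G u (x) = (∂u/∂x₁ (x), x₁ ∂u/∂x₂ (x))`. -/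
noncomputable def gradG (u : EuclideanSpace ℝ (Fin 2) → ℝ)
    (x : EuclideanSpace ℝ (Fin 2)) : EuclideanSpace ℝ (Fin 2) :=
  (WithLp.equiv 2 (Fin 2 → ℝ)).symm
    ![fderiv ℝ u x (EuclideanSpace.single 0 1),
      x 0 * fderiv ℝ u x (EuclideanSpace.single 1 1)]

/-- A weak sub-solution of `−∇_G·(|∇_G v|^{p−2} ∇_G v) = 0` in `Ω`. -/
def IsWeakSubSolutionGZero (p : ℝ) (Ω : Set (EuclideanSpace ℝ (Fin 2)))
    (v : EuclideanSpace ℝ (Fin 2) → ℝ) : Prop :=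
  ∀ φ : EuclideanSpace ℝ (Fin 2) → ℝ, ContDiff ℝ 1 φ → HasCompactSupport φ →
    tsupport φ ⊆ Ω → (∀ x, 0 ≤ φ x) →
    ∫ x in Ω, ‖gradG v x‖ ^ (p - 2) * ⟪gradG v x, gradG φ x⟫ ≤ 0

section Aux

lemma young' {p : ℝ} (hp : 1 < p) {a b : ℝ} (ha : 0 ≤ a) (hb : 0 ≤ b) :
    p * (a ^ (p-1) * b) ≤ (p-1)/p * a ^ p + p ^ (p-1) * b ^ p := by
  have hp0 : (0:ℝ) < p := lt_trans one_pos hp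
  have hp1 : (0:ℝ) < p - 1 := sub_pos.2 hp
  set q : ℝ := p / (p - 1) with hqdef
  have hq : q.HolderConjugate p := (Real.HolderConjugate.conjExponent hp).symm
  set c : ℝ := p ^ ((1-p)/p) with hcdef
  have hc : 0 < c := Real.rpow_pos_of_pos hp0 _
  have key := Real.young_inequality_of_nonneg
    (mul_nonneg (Real.rpow_nonneg ha (p-1)) hc.le) (div_nonneg hb hc.le) hq
  have h1 : a ^ (p-1) * c * (b / c) = a ^ (p-1) * b := by
    field_simp
  have hpq : (p - 1) * q = p := by rw [hqdef]; field_simp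
  have h2 : (a ^ (p-1) * c) ^ q = a ^ p * (1/p) := by
    rw [Real.mul_rpow (Real.rpow_nonneg ha _) hc.le, ← Real.rpow_mul ha, hpq, hcdef,
      ← Real.rpow_mul hp0.le]
    have h5 : (1 - p) / p * q = -1 := by rw [hqdef]; field_simp; ring
    rw [h5, Real.rpow_neg_one]
    ring
  have h3 : (b / c) ^ p = b ^ p * p ^ (p-1) := by
    rw [Real.div_rpow hb hc.le, hcdef, ← Real.rpow_mul hp0.le]
    have h4 : (1 - p) / p * p = 1 - p := by field_simp
    rw [h4, div_eq_mul_inv, ← Real.rpow_neg hp0.le, neg_sub]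
  rw [h1, h2, h3] at key
  have hq0 : 0 < q := hq.pos
  have hqinv : 1/q = (p-1)/p := by rw [hqdef]; field_simp
  calc p * (a ^ (p-1) * b) ≤ p * (a ^ p * (1/p) / q + b ^ p * p ^ (p-1) / p) := by
        exact mul_le_mul_of_nonneg_left key hp0.le
    _ = (p-1)/p * a ^ p + p ^ (p-1) * b ^ p := by
        have hq1 : q * (p - 1) = p := by rw [hqdef]; field_simp
        clear_value q
        field_simp
        linear_combination (-(a ^ p)) * hq1

lemma gradG_repr (u : EuclideanSpace ℝ (Fin 2) → ℝ) (x : EuclideanSpace ℝ (Fin 2)) :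
    gradG u x = (fderiv ℝ u x (EuclideanSpace.single 0 1)) • (EuclideanSpace.single 0 (1:ℝ))
      + (x 0 * fderiv ℝ u x (EuclideanSpace.single 1 1)) • (EuclideanSpace.single 1 (1:ℝ)) := by
  apply PiLp.ext
  intro i
  fin_cases i <;>
    simp [gradG, WithLp.equiv_symm_apply, PiLp.toLp_apply, EuclideanSpace.single_apply]

lemma gradG_comb {u v w : EuclideanSpace ℝ (Fin 2) → ℝ} {c d : ℝ}
    {x : EuclideanSpace ℝ (Fin 2)}
    (h : fderiv ℝ u x = c • fderiv ℝ v x + d • fderiv ℝ w x) :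
    gradG u x = c • gradG v x + d • gradG w x := by
  rw [gradG_repr, gradG_repr, gradG_repr, h]
  simp only [ContinuousLinearMap.add_apply, ContinuousLinearMap.coe_smul',
    Pi.smul_apply, smul_eq_mul]
  module

lemma gradG_zero_of_not_mem_tsupport {φ : EuclideanSpace ℝ (Fin 2) → ℝ}
    {x : EuclideanSpace ℝ (Fin 2)} (hx : x ∉ tsupport φ) : gradG φ x = 0 := by
  have h : fderiv ℝ φ x = 0 := by
    by_contra h
    exact hx (support_fderiv_subset ℝ h)
  rw [gradG_repr, h]
  simp

lemma gradG_continuousOn {v : EuclideanSpace ℝ (Fin 2) → ℝ}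
    {Ω : Set (EuclideanSpace ℝ (Fin 2))} (hΩ : IsOpen Ω) (hv : ContDiffOn ℝ 1 v Ω) :
    ContinuousOn (gradG v) Ω := by
  have hf : ContinuousOn (fderiv ℝ v) Ω := hv.continuousOn_fderiv_of_isOpen hΩ le_rfl
  have h0 : ContinuousOn (fun x => x 0 : EuclideanSpace ℝ (Fin 2) → ℝ) Ω :=
    (EuclideanSpace.proj (0 : Fin 2)).continuous.continuousOn
  simp only [funext fun x => gradG_repr v x]
  exact ((hf.clm_apply continuousOn_const).smul continuousOn_const).add
    ((h0.mul (hf.clm_apply continuousOn_const)).smul continuousOn_const)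

lemma gradG_measurable (v : EuclideanSpace ℝ (Fin 2) → ℝ) : Measurable (gradG v) := by
  have h0 : Measurable (fun x => x 0 : EuclideanSpace ℝ (Fin 2) → ℝ) :=
    (EuclideanSpace.proj (0 : Fin 2)).continuous.measurable
  simp only [funext fun x => gradG_repr v x]
  exact ((measurable_fderiv_apply_const ℝ v _).smul_const _).add
    ((h0.mul (measurable_fderiv_apply_const ℝ v _)).smul_const _)

lemma contDiff_of_zero_off_compact {f : EuclideanSpace ℝ (Fin 2) → ℝ}
    {Ω K : Set (EuclideanSpace ℝ (Fin 2))} (hΩ : IsOpen Ω) (hKΩ : K ⊆ Ω)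
    (hKc : IsClosed K) (hf : ContDiffOn ℝ 1 f Ω) (h0 : ∀ x ∉ K, f x = 0) :
    ContDiff ℝ 1 f := by
  rw [← contDiffOn_univ]
  intro x _
  by_cases hx : x ∈ Ω
  · exact ((hf x hx).contDiffAt (hΩ.mem_nhds hx)).contDiffWithinAt
  · have hxK : x ∉ K := fun h => hx (hKΩ h)
    have : f =ᶠ[nhds x] (fun _ => 0) :=
      Filter.eventuallyEq_of_mem (hKc.isOpen_compl.mem_nhds hxK) (fun y hy => h0 y hy)
    exact (contDiffAt_const.congr_of_eventuallyEq this).contDiffWithinAt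

lemma integrableOn_of_bound {Ω K : Set (EuclideanSpace ℝ (Fin 2))}
    {f : EuclideanSpace ℝ (Fin 2) → ℝ} (hK : IsCompact K)
    (hm : AEStronglyMeasurable f (volume.restrict Ω)) (C : ℝ)
    (hb : ∀ x ∈ K, |f x| ≤ C) (h0 : ∀ x ∉ K, f x = 0) :
    IntegrableOn f Ω := by
  apply Integrable.mono' (g := K.indicator fun _ => C)
    (((integrable_indicator_iff hK.measurableSet).2
      (integrableOn_const (C := C) hK.measure_lt_top.ne)).restrict) hm
  filter_upwards with x
  by_cases hx : x ∈ K
  · simp [Set.indicator_of_mem hx, Real.norm_eq_abs, hb x hx]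
  · simp [Set.indicator_of_notMem hx, h0 x hx]

lemma rpow_sub_two_mul_sq {p t : ℝ} (hp : 1 < p) (ht : 0 ≤ t) :
    t ^ (p - 2) * t ^ (2:ℕ) = t ^ p := by
  rcases eq_or_lt_of_le ht with h | h
  · rw [← h]
    simp [Real.zero_rpow (by positivity : p ≠ 0)]
  · rw [← Real.rpow_natCast t 2, ← Real.rpow_add h]
    norm_num

lemma rpow_sub_two_mul_self {p t : ℝ} (hp : 1 < p) (ht : 0 ≤ t) :
    t ^ (p - 2) * t = t ^ (p - 1) := by
  rcases eq_or_lt_of_le ht with h | h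
  · rw [← h]
    simp [Real.zero_rpow (by intro h; nlinarith : p - 1 ≠ 0)]
  · nth_rewrite 2 [← Real.rpow_one t]
    rw [← Real.rpow_add h]
    ring_nf

lemma abs_weight_inner_le {p : ℝ} (hp : 1 < p) (y z : EuclideanSpace ℝ (Fin 2)) :
    |‖y‖ ^ (p - 2) * ⟪y, z⟫| ≤ ‖y‖ ^ (p - 1) * ‖z‖ := by
  rw [abs_mul, abs_of_nonneg (Real.rpow_nonneg (norm_nonneg y) _)]
  calc ‖y‖ ^ (p-2) * |⟪y, z⟫| ≤ ‖y‖ ^ (p-2) * (‖y‖ * ‖z‖) :=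
        mul_le_mul_of_nonneg_left (abs_real_inner_le_norm y z)
          (Real.rpow_nonneg (norm_nonneg y) _)
    _ = ‖y‖ ^ (p-1) * ‖z‖ := by
        rw [← mul_assoc, rpow_sub_two_mul_self hp (norm_nonneg y)]

end Aux

set_option maxHeartbeats 2000000 in
/-- **Caccioppoli inequality on the Grushin plane, case `q = p`, `λ = 0`:**
if `v > 0` is a weak sub-solution of `−∇_G·(|∇_G v|^{p−2} ∇_G v) = 0` in `Ω ⊆ G`,
then for every nonnegative `φ ∈ C_c^∞(Ω)`,
`∫_Ω φ^p ‖∇_G v‖^p ≤ p^p ∫_Ω v^p ‖∇_G φ‖^p`. -/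
theorem caccioppoli_grushin_zero (p : ℝ) (hp : 1 < p)
    (Ω : Set (EuclideanSpace ℝ (Fin 2))) (hΩ : IsOpen Ω)
    (v : EuclideanSpace ℝ (Fin 2) → ℝ)
    (hv : ContDiffOn ℝ 1 v Ω) (hvpos : ∀ x ∈ Ω, 0 < v x)
    (hsub : IsWeakSubSolutionGZero p Ω v) :
    ∀ φ : EuclideanSpace ℝ (Fin 2) → ℝ, ContDiff ℝ (⊤ : ℕ∞) φ → HasCompactSupport φ →
      tsupport φ ⊆ Ω → (∀ x, 0 ≤ φ x) →
      ∫ x in Ω, φ x ^ p * ‖gradG v x‖ ^ p ≤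
        p ^ p * ∫ x in Ω, v x ^ p * ‖gradG φ x‖ ^ p := by
  intro φ hφ hφc hφΩ hφ0
  have hp0 : (0:ℝ) < p := lt_trans one_pos hp
  have hp1 : (0:ℝ) < p - 1 := sub_pos.2 hp
  have hΩm : MeasurableSet Ω := hΩ.measurableSet
  set K := tsupport φ with hKdef
  have hKc : IsCompact K := hφc
  have hKcl : IsClosed K := isClosed_tsupport φ
  have hφK : ∀ x ∉ K, φ x = 0 := fun x hx => image_eq_zero_of_notMem_tsupport hx
  have hφcont : Continuous φ := hφ.continuous
  -- the test function η = φ^p * v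
  set η : EuclideanSpace ℝ (Fin 2) → ℝ := fun x => φ x ^ p * v x with hηdef
  have hψc : ContDiff ℝ 1 (fun x => φ x ^ p) :=
    (Real.contDiff_rpow_const_of_le (by exact_mod_cast hp.le : ((1:ℕ):ℝ) ≤ p)).comp
      (hφ.of_le (by simp))
  have hη0 : ∀ x ∉ K, η x = 0 := by
    intro x hx
    rw [hηdef]
    simp [hφK x hx, Real.zero_rpow hp0.ne']
  have hηc1 : ContDiff ℝ 1 η :=
    contDiff_of_zero_off_compact hΩ hφΩ hKcl (hψc.contDiffOn.mul hv) hη0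
  have hηcs : HasCompactSupport η := HasCompactSupport.intro hKc hη0
  have hηΩ : tsupport η ⊆ Ω :=
    (closure_minimal (Function.support_subset_iff'.2 hη0) hKcl).trans hφΩ
  have hηnn : ∀ x, 0 ≤ η x := by
    intro x
    by_cases hx : x ∈ Ω
    · exact mul_nonneg (Real.rpow_nonneg (hφ0 x) p) (hvpos x hx).le
    · rw [hη0 x (fun h => hx (hφΩ h))]
  have key := hsub η hηc1 hηcs hηΩ hηnn
  -- derivative formula on Ω
  have hder : ∀ x ∈ Ω, fderiv ℝ η x
      = (φ x ^ p) • fderiv ℝ v x + (v x * (p * φ x ^ (p-1))) • fderiv ℝ φ x := by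
    intro x hx
    have hφd : HasFDerivAt φ (fderiv ℝ φ x) x :=
      ((hφ.differentiable (by simp)) x).hasFDerivAt
    have hg : HasDerivAt (fun t : ℝ => t ^ p) (p * φ x ^ (p-1)) (φ x) :=
      Real.hasDerivAt_rpow_const (Or.inr hp.le)
    have hψd : HasFDerivAt (fun y => φ y ^ p) ((p * φ x ^ (p-1)) • fderiv ℝ φ x) x :=
      hg.comp_hasFDerivAt x hφd
    have hvd : HasFDerivAt v (fderiv ℝ v x) x :=
      (((hv x hx).contDiffAt (hΩ.mem_nhds hx)).differentiableAt one_ne_zero).hasFDerivAt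
    have hmul : HasFDerivAt η _ x := hψd.mul hvd
    rw [hmul.fderiv, smul_smul]
  -- rewrite the weak-subsolution integral
  have hkey2 : ∫ x in Ω, (φ x ^ p * ‖gradG v x‖ ^ p
      + (p * v x * φ x ^ (p-1)) * (‖gradG v x‖ ^ (p-2) * ⟪gradG v x, gradG φ x⟫)) ≤ 0 := by
    refine le_trans (le_of_eq ?_) key
    apply setIntegral_congr_fun hΩm
    intro x hx
    have hgr : gradG η x = (φ x ^ p) • gradG v x + (v x * (p * φ x ^ (p-1))) • gradG φ x :=
      gradG_comb (hder x hx)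
    dsimp only
    rw [hgr, inner_add_right, real_inner_smul_right, real_inner_smul_right,
      real_inner_self_eq_norm_sq, ← rpow_sub_two_mul_sq hp (norm_nonneg (gradG v x))]
    ring
  -- bounds on K
  obtain ⟨C1, hC1⟩ := hKc.exists_bound_of_continuousOn (hv.continuousOn.mono hφΩ)
  obtain ⟨C2, hC2⟩ := hKc.exists_bound_of_continuousOn ((gradG_continuousOn hΩ hv).mono hφΩ)
  obtain ⟨C3, hC3⟩ := hKc.exists_bound_of_continuousOn hφcont.continuousOn
  obtain ⟨C4, hC4⟩ := hKc.exists_bound_of_continuousOn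
    ((gradG_continuousOn isOpen_univ (hφ.of_le (by simp)).contDiffOn).mono (Set.subset_univ K))
  set D1 := max C1 0 with hD1def
  set D2 := max C2 0 with hD2def
  set D3 := max C3 0 with hD3def
  set D4 := max C4 0 with hD4def
  have hD1 : ∀ x ∈ K, |v x| ≤ D1 := fun x hx => le_trans (hC1 x hx) (le_max_left _ _)
  have hD2 : ∀ x ∈ K, ‖gradG v x‖ ≤ D2 := fun x hx => le_trans (hC2 x hx) (le_max_left _ _)
  have hD3 : ∀ x ∈ K, φ x ≤ D3 := fun x hx =>
    le_trans (le_trans (le_abs_self _) (hC3 x hx)) (le_max_left _ _)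
  have hD4 : ∀ x ∈ K, ‖gradG φ x‖ ≤ D4 := fun x hx => le_trans (hC4 x hx) (le_max_left _ _)
  have hD1nn : 0 ≤ D1 := le_max_right _ _
  have hD2nn : 0 ≤ D2 := le_max_right _ _
  have hD3nn : 0 ≤ D3 := le_max_right _ _
  have hD4nn : 0 ≤ D4 := le_max_right _ _
  have hrpm : ∀ c : ℝ, Measurable (fun t : ℝ => t ^ c) := fun c => by measurability
  -- integrability of the three main integrands
  have hFi : IntegrableOn (fun x => φ x ^ p * ‖gradG v x‖ ^ p) Ω := by
    refine integrableOn_of_bound hKc ?_ (D3 ^ p * D2 ^ p) ?_ ?_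
    · exact ((((hrpm p).comp hφcont.measurable)).mul
        ((hrpm p).comp (gradG_measurable v).norm)).aestronglyMeasurable
    · intro x hx
      rw [abs_of_nonneg (mul_nonneg (Real.rpow_nonneg (hφ0 x) _)
        (Real.rpow_nonneg (norm_nonneg _) _))]
      exact mul_le_mul (Real.rpow_le_rpow (hφ0 x) (hD3 x hx) hp0.le)
        (Real.rpow_le_rpow (norm_nonneg _) (hD2 x hx) hp0.le)
        (Real.rpow_nonneg (norm_nonneg _) _) (Real.rpow_nonneg hD3nn _)
    · intro x hx
      simp [hφK x hx, Real.zero_rpow hp0.ne']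
  have hGm : AEStronglyMeasurable (fun x => p * v x * φ x ^ (p-1)
      * (‖gradG v x‖ ^ (p-2) * ⟪gradG v x, gradG φ x⟫)) (volume.restrict Ω) := by
    have m1 : AEStronglyMeasurable (fun x => p * v x * φ x ^ (p-1)) (volume.restrict Ω) :=
      (aestronglyMeasurable_const.mul (hv.continuousOn.aestronglyMeasurable hΩm)).mul
        (((hrpm (p-1)).comp hφcont.measurable).aestronglyMeasurable)
    have m2 : Measurable (fun x => ‖gradG v x‖ ^ (p-2) * ⟪gradG v x, gradG φ x⟫) :=
      ((hrpm (p-2)).comp (gradG_measurable v).norm).mul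
        ((gradG_measurable v).inner (gradG_measurable φ))
    exact m1.mul m2.aestronglyMeasurable
  have hGi : IntegrableOn (fun x => p * v x * φ x ^ (p-1)
      * (‖gradG v x‖ ^ (p-2) * ⟪gradG v x, gradG φ x⟫)) Ω := by
    apply integrableOn_of_bound hKc hGm (p * D1 * D3 ^ (p-1) * (D2 ^ (p-1) * D4))
    · intro x hx
      rw [abs_mul]
      apply mul_le_mul
      · rw [abs_mul, abs_mul, abs_of_nonneg hp0.le,
          abs_of_nonneg (Real.rpow_nonneg (hφ0 x) _)]
        exact mul_le_mul (mul_le_mul le_rfl (hD1 x hx) (abs_nonneg _) hp0.le)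
          (Real.rpow_le_rpow (hφ0 x) (hD3 x hx) hp1.le)
          (Real.rpow_nonneg (hφ0 x) _)
          (mul_nonneg hp0.le hD1nn)
      · exact le_trans (abs_weight_inner_le hp _ _)
          (mul_le_mul (Real.rpow_le_rpow (norm_nonneg _) (hD2 x hx) hp1.le) (hD4 x hx)
            (norm_nonneg _) (Real.rpow_nonneg hD2nn _))
      · exact abs_nonneg _
      · exact mul_nonneg (mul_nonneg hp0.le hD1nn) (Real.rpow_nonneg hD3nn _)
    · intro x hx
      simp [hφK x hx, Real.zero_rpow hp1.ne']
  have hHi : IntegrableOn (fun x => v x ^ p * ‖gradG φ x‖ ^ p) Ω := by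
    refine integrableOn_of_bound hKc ?_ (D1 ^ p * D4 ^ p) ?_ ?_
    · exact ((hv.continuousOn.rpow_const (fun x _ => Or.inr hp0.le)).aestronglyMeasurable hΩm).mul
        (((hrpm p).comp (gradG_measurable φ).norm).aestronglyMeasurable)
    · intro x hx
      have hvx : 0 ≤ v x := (hvpos x (hφΩ hx)).le
      rw [abs_of_nonneg (mul_nonneg (Real.rpow_nonneg hvx _)
        (Real.rpow_nonneg (norm_nonneg _) _))]
      exact mul_le_mul
        (Real.rpow_le_rpow hvx (le_trans (le_abs_self _) (hD1 x hx)) hp0.le)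
        (Real.rpow_le_rpow (norm_nonneg _) (hD4 x hx) hp0.le)
        (Real.rpow_nonneg (norm_nonneg _) _) (Real.rpow_nonneg hD1nn _)
    · intro x hx
      simp [gradG_zero_of_not_mem_tsupport hx, Real.zero_rpow hp0.ne']
  -- split the integral
  rw [integral_add hFi hGi] at hkey2
  -- pointwise Young estimate
  have hmono : ∫ x in Ω, -(p * v x * φ x ^ (p-1)
        * (‖gradG v x‖ ^ (p-2) * ⟪gradG v x, gradG φ x⟫))
      ≤ ∫ x in Ω, ((p-1)/p * (φ x ^ p * ‖gradG v x‖ ^ p)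
        + p ^ (p-1) * (v x ^ p * ‖gradG φ x‖ ^ p)) := by
    apply setIntegral_mono_on hGi.neg ((hFi.const_mul _).add (hHi.const_mul _)) hΩm
    intro x hx
    have hvx : 0 ≤ v x := (hvpos x hx).le
    have hcnn : 0 ≤ p * v x * φ x ^ (p-1) :=
      mul_nonneg (mul_nonneg hp0.le hvx) (Real.rpow_nonneg (hφ0 x) _)
    have h1 : -(p * v x * φ x ^ (p-1) * (‖gradG v x‖ ^ (p-2) * ⟪gradG v x, gradG φ x⟫))
        ≤ (p * v x * φ x ^ (p-1)) * (‖gradG v x‖ ^ (p-1) * ‖gradG φ x‖) := by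
      calc -(p * v x * φ x ^ (p-1) * (‖gradG v x‖ ^ (p-2) * ⟪gradG v x, gradG φ x⟫))
          = (p * v x * φ x ^ (p-1)) * (-(‖gradG v x‖ ^ (p-2) * ⟪gradG v x, gradG φ x⟫)) := by
            ring
        _ ≤ (p * v x * φ x ^ (p-1)) * |‖gradG v x‖ ^ (p-2) * ⟪gradG v x, gradG φ x⟫| :=
            mul_le_mul_of_nonneg_left (neg_le_abs _) hcnn
        _ ≤ _ := mul_le_mul_of_nonneg_left (abs_weight_inner_le hp _ _) hcnn
    have ha : 0 ≤ φ x * ‖gradG v x‖ := mul_nonneg (hφ0 x) (norm_nonneg _)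
    have hb : 0 ≤ v x * ‖gradG φ x‖ := mul_nonneg hvx (norm_nonneg _)
    have h3 := young' hp ha hb
    rw [Real.mul_rpow (hφ0 x) (norm_nonneg _), Real.mul_rpow (hφ0 x) (norm_nonneg _),
      Real.mul_rpow hvx (norm_nonneg _)] at h3
    have h2 : (p * v x * φ x ^ (p-1)) * (‖gradG v x‖ ^ (p-1) * ‖gradG φ x‖)
        = p * (φ x ^ (p-1) * ‖gradG v x‖ ^ (p-1) * (v x * ‖gradG φ x‖)) := by ring
    calc -(p * v x * φ x ^ (p-1) * (‖gradG v x‖ ^ (p-2) * ⟪gradG v x, gradG φ x⟫))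
        ≤ p * (φ x ^ (p-1) * ‖gradG v x‖ ^ (p-1) * (v x * ‖gradG φ x‖)) := by
          rw [← h2]; exact h1
      _ ≤ (p-1)/p * (φ x ^ p * ‖gradG v x‖ ^ p) + p ^ (p-1) * (v x ^ p * ‖gradG φ x‖ ^ p) := by
          exact h3
  rw [integral_neg, integral_add (hFi.const_mul _) (hHi.const_mul _),
    integral_const_mul, integral_const_mul] at hmono
  set A := ∫ x in Ω, φ x ^ p * ‖gradG v x‖ ^ p with hAdef
  set B := ∫ x in Ω, v x ^ p * ‖gradG φ x‖ ^ p with hBdef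
  have hstep : A ≤ (p-1)/p * A + p ^ (p-1) * B := by linarith
  have hpp : p * p ^ (p-1) = p ^ p := by
    nth_rewrite 1 [← Real.rpow_one p]
    rw [← Real.rpow_add hp0]
    ring_nf
  have h9 := mul_le_mul_of_nonneg_left hstep hp0.le
  have h10 : p * ((p-1)/p * A + p ^ (p-1) * B) = (p-1) * A + p ^ p * B := by
    have hc : p * ((p-1)/p) = p - 1 := by field_simp
    rw [mul_add, ← mul_assoc, hc, ← mul_assoc, hpp]
  linarith
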